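/- If E is constant in time and t_m + t_e ≥ δ > 0 on [0,∞), then P(t,x) converges as t → ∞ to a value lying in the closed interval between min(A_E(x), A_P(x)) and max(A_E(x), A_P(x)); in particular dist(P(t,x), [min(A_E,A_P), max(A_E,A_P)]) → 0. -/

import Mathlib

/-!
Above `max A_E A_P` the right-hand side is at most `-(t_m + t_e) (P - max A_E A_P) ≤ -δ (P - max A_E A_P)`,
so the excess of `P` over `max A_E A_P` decays at least like `e^{-δ t}`; this follows from the
fencing theorem for differential inequalities. The same bound for `-P` controls the shortfall below
`min A_E A_P`, and the distance to the interval is at most the sum of the two.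
-/

open Filter Real Set

theorem le_add_mul_exp_neg_of_hasDerivAt {P P' : ℝ → ℝ} {M δ : ℝ} (hδ : 0 < δ)
    (hP : ∀ t, HasDerivAt P (P' t) t) (hdrift : ∀ t, M ≤ P t → P' t ≤ -δ * (P t - M))
    {t : ℝ} (ht : 0 ≤ t) : P t ≤ M + max (P 0 - M) 0 * exp (-δ * t) := by
  set c := max (P 0 - M) 0
  have hc : 0 ≤ c := le_max_right _ _
  -- Adding `ε > 0` to the barrier `M + c e^{-δt}` makes the slope comparison strict, as the fencing
  -- theorem requires.
  refine le_of_forall_pos_le_add fun ε hε => ?_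
  have hbarrier : ∀ s, HasDerivAt (fun s => M + ε + c * exp (-δ * s))
      (c * (exp (-δ * s) * -δ)) s := fun s =>
    (((hasDerivAt_id s).const_mul (-δ)).exp.const_mul c).const_add _ |>.congr_deriv
      (by simp only [id_eq, neg_mul, mul_one, mul_neg])
  have hle := image_le_of_deriv_right_lt_deriv_boundary (a := 0) (b := t)
    (fun s _ => (hP s).continuousAt.continuousWithinAt) (fun s _ => (hP s).hasDerivWithinAt)
    (by simp only [mul_zero, exp_zero, mul_one]; linarith [le_max_left (P 0 - M) 0]) hbarrier
    (fun s _ hs => by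
      have hexp := mul_nonneg hc (exp_pos (-δ * s)).le
      calc P' s ≤ -δ * (P s - M) := hdrift s (by rw [hs]; linarith)
        _ < c * (exp (-δ * s) * -δ) := by rw [hs]; nlinarith)
    ⟨ht, le_rfl⟩
  linarith

theorem linear_drift_le {tm te A B p δ : ℝ} (htm : 0 ≤ tm) (hte : 0 ≤ te) (hsum : δ ≤ tm + te)
    (hp : max A B ≤ p) : tm * (A - p) + te * (B - p) ≤ -δ * (p - max A B) := by
  have hA : tm * (A - p) ≤ tm * (max A B - p) :=
    mul_le_mul_of_nonneg_left (by linarith [le_max_left A B]) htm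
  have hB : te * (B - p) ≤ te * (max A B - p) :=
    mul_le_mul_of_nonneg_left (by linarith [le_max_right A B]) hte
  nlinarith

theorem sub_max_le_mul_exp_neg {tm te P : ℝ → ℝ} {A B δ : ℝ} (hδ : 0 < δ)
    (htm : ∀ t, 0 ≤ tm t) (hte : ∀ t, 0 ≤ te t) (hsum : ∀ t, δ ≤ tm t + te t)
    (hP : ∀ t, HasDerivAt P (tm t * (A - P t) + te t * (B - P t)) t) {t : ℝ} (ht : 0 ≤ t) :
    P t - max A B ≤ max (P 0 - max A B) 0 * exp (-δ * t) := by
  have := le_add_mul_exp_neg_of_hasDerivAt hδ hP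
    (fun s hs => linear_drift_le (htm s) (hte s) (hsum s) hs) ht
  linarith

theorem infDist_Icc_le (x a b : ℝ) :
    Metric.infDist x (Icc a b) ≤ max (x - b) 0 + max (a - x) 0 := by
  rcases le_or_gt a b with hab | hab
  · calc Metric.infDist x (Icc a b) ≤ dist x (max a (min x b)) :=
          Metric.infDist_le_dist_of_mem ⟨le_max_left _ _, max_le hab (min_le_right _ _)⟩
      _ ≤ max (x - b) 0 + max (a - x) 0 := by
          rw [Real.dist_eq, abs_le]
          simp only [max_def, min_def]
          constructor <;> split_ifs <;> linarith
  · rw [Icc_eq_empty hab.not_ge, Metric.infDist_empty]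
    positivity

theorem population_attracted_to_interval_general
    (tm te P : ℝ → ℝ) (AE AP δ : ℝ) (hδ : 0 < δ)
    (htmnn : ∀ t, 0 ≤ tm t) (htenn : ∀ t, 0 ≤ te t)
    (hsum : ∀ t, δ ≤ tm t + te t)
    (hP : ∀ t, HasDerivAt P (tm t * (AE - P t) + te t * (AP - P t)) t) :
    Tendsto (fun t => Metric.infDist (P t) (Set.Icc (min AE AP) (max AE AP)))
      atTop (nhds 0) := by
  have hupper : ∀ t ≥ 0, P t - max AE AP ≤ max (P 0 - max AE AP) 0 * exp (-δ * t) :=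
    fun t ht => sub_max_le_mul_exp_neg hδ htmnn htenn hsum hP ht
  have hPneg : ∀ t, HasDerivAt (-P) (tm t * (-AE - (-P) t) + te t * (-AP - (-P) t)) t :=
    fun t => (hP t).neg.congr_deriv (by simp only [Pi.neg_apply]; ring)
  have hlower : ∀ t ≥ 0, min AE AP - P t ≤ max (min AE AP - P 0) 0 * exp (-δ * t) := by
    intro t ht
    have := sub_max_le_mul_exp_neg hδ htmnn htenn hsum hPneg ht
    simpa only [Pi.neg_apply, max_neg_neg, sub_neg_eq_add, neg_add_eq_sub] using this
  have hdecay : Tendsto (fun t => exp (-δ * t)) atTop (nhds 0) := by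
    simpa only [Function.comp_def, id, neg_mul] using
      tendsto_exp_neg_atTop_nhds_zero.comp (tendsto_id.const_mul_atTop hδ)
  refine squeeze_zero' (Eventually.of_forall fun t => Metric.infDist_nonneg)
    ((eventually_ge_atTop 0).mono fun t ht => (infDist_Icc_le _ _ _).trans
      (add_le_add (max_le (hupper t ht) (by positivity)) (max_le (hlower t ht) (by positivity))))
    (by simpa only [neg_mul, mul_zero, add_zero] using
      (hdecay.const_mul _).add (hdecay.const_mul _))

/-- With `E` constant in time and `t_m + t_e ≥ δ > 0`, the distance from `P(t)`
to the closed interval between the two attractor values tends to `0`. -/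
theorem population_attracted_to_interval
    (tm te P : ℝ → ℝ) (AE AP δ : ℝ) (hδ : 0 < δ)
    (htm : Continuous tm) (hte : Continuous te)
    (htmnn : ∀ t, 0 ≤ tm t) (htenn : ∀ t, 0 ≤ te t)
    (hsum : ∀ t, δ ≤ tm t + te t)
    (hP : ∀ t, HasDerivAt P (tm t * (AE - P t) + te t * (AP - P t)) t) :
    Tendsto (fun t => Metric.infDist (P t) (Set.Icc (min AE AP) (max AE AP)))
      atTop (nhds 0) :=
  population_attracted_to_interval_general tm te P AE AP δ hδ htmnn htenn hsum hP
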